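/- The radius 1 − √(2/3) is best possible in the Bohr inequality for derivatives: for every r with 1 − √(2/3) < r < 1 there exists an analytic function w on the open unit disk D with w(D) ⊆ D and w(0) = 0 such that M_{w'}(r) > 1. (Such examples are given by w(z) = ξ_a(z) := z(z−a)/(1−az) with a ∈ [0,1) close to 1.) -/

import Mathlib

open Metric

/-- The majorant series `M_F(r) = ∑ |A_n| r^n` of an analytic function
`F(z) = ∑ A_n z^n` on the unit disk, where `A_n = F⁽ⁿ⁾(0)/n!`. -/
noncomputable def majorant (F : ℂ → ℂ) (r : ℝ) : ℝ :=
  ∑' n : ℕ, ‖iteratedDeriv n F 0 / n.factorial‖ * r ^ n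

/-- `g` is subordinate to `f` on the unit disk: `g = f ∘ φ` for some analytic
self-map `φ` of the unit disk with `φ 0 = 0`. -/
def Subordinate (g f : ℂ → ℂ) : Prop :=
  ∃ φ : ℂ → ℂ, AnalyticOnNhd ℂ φ (ball 0 1) ∧ φ 0 = 0 ∧
    Set.MapsTo φ (ball 0 1) (ball 0 1) ∧ Set.EqOn g (f ∘ φ) (ball 0 1)

/-!
For `0 ≤ a < 1` the function `ξ_a(z) = z(z - a)/(1 - az) = -az + (1 - a²) ∑ₖ aᵏ zᵏ⁺²` maps the disk
into itself, because `|1 - az|² - |z - a|² = (1 - a²)(1 - |z|²)`. Its derivative has nonnegative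
coefficients apart from the constant term `-a`, which gives
`M_{ξ_a'}(r) = a + (1 - a²) r (2 - ar)/(1 - ar)²`, and
`M_{ξ_a'}(r) - 1 = (1 - a) G(a)/(1 - ar)²` with `G(a) = (1 + a) r (2 - ar) - (1 - ar)²`.
Since `G(1) = 2 - 3(1 - r)²` is positive exactly when `r > 1 - √(2/3)`, continuity gives
`G(a) > 0`, hence `M_{ξ_a'}(r) > 1`, for `a < 1` close to `1`.
-/

open FormalMultilinearSeries NNReal Filter Topology

theorem iteratedDeriv_div_factorial_eq_of_hasFPowerSeriesAt {𝕜 : Type*}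
    [NontriviallyNormedField 𝕜] [CompleteSpace 𝕜] [CharZero 𝕜] {f : 𝕜 → 𝕜} {c : ℕ → 𝕜} {x : 𝕜}
    (hf : HasFPowerSeriesAt f (ofScalars 𝕜 c) x) (n : ℕ) :
    iteratedDeriv n f x / n.factorial = c n :=
  congrFun (ofScalars_series_injective 𝕜 𝕜
    (hf.analyticAt.hasFPowerSeriesAt.eq_formalMultilinearSeries hf)) n

theorem hasFPowerSeriesOnBall_ofScalars_of_hasSum {𝕜 : Type*} [RCLike 𝕜] {f : 𝕜 → 𝕜}
    {c : ℕ → 𝕜} {R : ℝ≥0} (hR : 0 < R)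
    (hf : ∀ z : 𝕜, ‖z‖ < R → HasSum (fun n ↦ c n * z ^ n) (f z)) :
    HasFPowerSeriesOnBall f (ofScalars 𝕜 c) 0 R := by
  refine ⟨ENNReal.le_of_forall_nnreal_lt fun ρ hρ ↦ ?_, by exact_mod_cast hR, fun {z} hz ↦ ?_⟩
  · have hρR : ‖((ρ : ℝ) : 𝕜)‖ < R := by simpa using hρ
    refine le_radius_of_tendsto _ (l := 0) ?_
    simpa [ofScalars_norm] using (hf _ hρR).summable.tendsto_atTop_zero.norm
  · simpa [ofScalars_apply_eq, mul_comm] using hf z (by simpa using hz)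

theorem majorant_deriv_eq_tsum {f : ℂ → ℂ} {c : ℕ → ℂ}
    (hf : HasFPowerSeriesAt f (ofScalars ℂ c) 0) (r : ℝ) :
    majorant (deriv f) r = ∑' n : ℕ, (n + 1) * ‖c (n + 1)‖ * r ^ n := by
  refine tsum_congr fun n ↦ ?_
  have hcoeff : iteratedDeriv (n + 1) f 0 / n.factorial = (n + 1 : ℕ) * c (n + 1) := by
    rw [← iteratedDeriv_div_factorial_eq_of_hasFPowerSeriesAt hf, Nat.factorial_succ]
    push_cast
    field_simp
  rw [← iteratedDeriv_succ', hcoeff, norm_mul, Complex.norm_natCast]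
  push_cast
  rfl

noncomputable def xi (a : ℝ) (z : ℂ) : ℂ := z * (z - a) / (1 - a * z)

def xiCoeff (a : ℝ) : ℕ → ℝ
  | 0 => 0
  | 1 => -a
  | k + 2 => (1 - a ^ 2) * a ^ k

theorem hasSum_nat_add_two_mul_geometric {𝕜 : Type*} [NormedField 𝕜] [CompleteSpace 𝕜] {x : 𝕜}
    (hx : ‖x‖ < 1) : HasSum (fun m : ℕ ↦ ((m : 𝕜) + 2) * x ^ m) ((2 - x) / (1 - x) ^ 2) := by
  have hx1 : 1 - x ≠ 0 := (isUnit_one_sub_of_norm_lt_one hx).ne_zero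
  convert (hasSum_coe_mul_geometric_of_norm_lt_one hx).add
    ((hasSum_geometric_of_norm_lt_one hx).mul_left 2) using 1
  · ext m; ring
  · field_simp; ring

theorem normSq_one_sub_mul_sub_normSq_sub (a : ℝ) (z : ℂ) :
    Complex.normSq (1 - a * z) - Complex.normSq (z - a) = (1 - a ^ 2) * (1 - Complex.normSq z) := by
  simp only [Complex.normSq_apply, Complex.sub_re, Complex.sub_im, Complex.mul_re, Complex.mul_im,
    Complex.one_re, Complex.one_im, Complex.ofReal_re, Complex.ofReal_im]
  ring

section xi

variable {a : ℝ}

theorem norm_ofReal_mul_lt_one (ha : |a| ≤ 1) {z : ℂ} (hz : ‖z‖ < 1) : ‖(a : ℂ) * z‖ < 1 := by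
  rw [norm_mul, Complex.norm_real, Real.norm_eq_abs]
  nlinarith [abs_nonneg a, norm_nonneg z]

theorem norm_sub_le_norm_one_sub_mul (ha : |a| ≤ 1) {z : ℂ} (hz : ‖z‖ ≤ 1) :
    ‖z - a‖ ≤ ‖1 - a * z‖ := by
  rw [← sq_le_sq₀ (norm_nonneg _) (norm_nonneg _), Complex.sq_norm, Complex.sq_norm]
  have hz2 : Complex.normSq z ≤ 1 := by
    rw [← Complex.sq_norm]; nlinarith [norm_nonneg z]
  have ha2 : a ^ 2 ≤ 1 := by nlinarith [abs_nonneg a, sq_abs a]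
  nlinarith [normSq_one_sub_mul_sub_normSq_sub a z]

theorem xi_zero : xi a 0 = 0 := by simp [xi]

theorem mapsTo_xi (ha : |a| ≤ 1) : Set.MapsTo (xi a) (ball 0 1) (ball 0 1) := by
  intro z hz
  rw [mem_ball_zero_iff] at hz ⊢
  have hden : (0 : ℝ) < ‖1 - (a : ℂ) * z‖ :=
    norm_pos_iff.mpr (isUnit_one_sub_of_norm_lt_one (norm_ofReal_mul_lt_one ha hz)).ne_zero
  calc ‖xi a z‖ = ‖z‖ * (‖z - a‖ / ‖1 - a * z‖) := by rw [xi, norm_div, norm_mul, mul_div_assoc]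
    _ ≤ ‖z‖ * 1 := by
      gcongr
      exact (div_le_one hden).mpr (norm_sub_le_norm_one_sub_mul ha hz.le)
    _ < 1 := by simpa using hz

theorem hasSum_xiCoeff (ha : |a| ≤ 1) {z : ℂ} (hz : ‖z‖ < 1) :
    HasSum (fun n ↦ (xiCoeff a n : ℂ) * z ^ n) (xi a z) := by
  have haz := norm_ofReal_mul_lt_one ha hz
  have hden : 1 - (a : ℂ) * z ≠ 0 := (isUnit_one_sub_of_norm_lt_one haz).ne_zero
  have htail : xi a z - ∑ n ∈ Finset.range 2, (xiCoeff a n : ℂ) * z ^ n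
      = (1 - (a : ℂ) ^ 2) * z ^ 2 * (1 - a * z)⁻¹ := by
    simp only [Finset.sum_range_succ, Finset.sum_range_zero, xiCoeff, xi]
    push_cast
    linear_combination (-(a : ℂ) * z) * mul_inv_cancel₀ hden
  rw [← hasSum_nat_add_iff' 2, htail]
  refine ((hasSum_geometric_of_norm_lt_one haz).mul_left _).congr_fun fun k ↦ ?_
  simp only [xiCoeff]
  push_cast
  ring

theorem hasFPowerSeriesOnBall_xi (ha : |a| ≤ 1) :
    HasFPowerSeriesOnBall (xi a) (ofScalars ℂ fun n ↦ (xiCoeff a n : ℂ)) 0 1 := by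
  exact_mod_cast hasFPowerSeriesOnBall_ofScalars_of_hasSum one_pos
    fun z hz ↦ hasSum_xiCoeff ha (by exact_mod_cast hz)

theorem analyticOnNhd_xi (ha : |a| ≤ 1) : AnalyticOnNhd ℂ (xi a) (ball 0 1) := by
  simpa [← ENNReal.coe_one, Metric.eball_coe] using (hasFPowerSeriesOnBall_xi ha).analyticOnNhd

theorem majorant_deriv_xi (ha₀ : 0 ≤ a) (ha₁ : a ≤ 1) {r : ℝ} (hr : |r| < 1) :
    majorant (deriv (xi a)) r = a + (1 - a ^ 2) * r * (2 - a * r) / (1 - a * r) ^ 2 := by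
  have har : ‖a * r‖ < 1 := by
    rw [Real.norm_eq_abs, abs_mul]; nlinarith [abs_nonneg r, abs_of_nonneg ha₀]
  have ha2 : 0 ≤ 1 - a ^ 2 := by nlinarith
  have hxi := hasFPowerSeriesOnBall_xi (abs_le.mpr ⟨by linarith, ha₁⟩)
  rw [majorant_deriv_eq_tsum hxi.hasFPowerSeriesAt]
  refine HasSum.tsum_eq ?_
  rw [← hasSum_nat_add_iff' 1, Finset.sum_range_one]
  have hhead : ((0 : ℕ) + 1 : ℝ) * ‖(xiCoeff a (0 + 1) : ℂ)‖ * r ^ 0 = a := by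
    simp [xiCoeff, abs_of_nonneg ha₀]
  rw [hhead, add_sub_cancel_left, mul_div_assoc]
  refine ((hasSum_nat_add_two_mul_geometric har).mul_left ((1 - a ^ 2) * r)).congr_fun fun k ↦ ?_
  rw [Complex.norm_real, Real.norm_eq_abs]
  simp only [xiCoeff]
  rw [abs_of_nonneg (by positivity)]
  push_cast
  ring

end xi

theorem exists_one_lt_majorant_deriv_xi {r : ℝ} (hr₀ : 1 - √(2 / 3) < r) (hr₁ : r < 1) :
    ∃ a : ℝ, 0 ≤ a ∧ a < 1 ∧ 1 < majorant (deriv (xi a)) r := by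
  set G : ℝ → ℝ := fun a ↦ (1 + a) * r * (2 - a * r) - (1 - a * r) ^ 2
  have hG₁ : 0 < G 1 := by
    have h23 : (1 - r) ^ 2 < 2 / 3 := by
      rw [← Real.sq_sqrt (by norm_num : (0 : ℝ) ≤ 2 / 3)]
      exact pow_lt_pow_left₀ (by linarith) (by linarith) two_ne_zero
    simp only [G]; nlinarith
  have hG : ∀ᶠ a in 𝓝 1, 0 < G a ∧ 0 < a :=
    ((by fun_prop : Continuous G).tendsto 1 |>.eventually_const_lt hG₁).and
      (eventually_gt_nhds one_pos)
  obtain ⟨a, ⟨hGa, ha₀⟩, ha₁⟩ := ((hG.filter_mono nhdsWithin_le_nhds).and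
    (self_mem_nhdsWithin : ∀ᶠ a in 𝓝[<] (1 : ℝ), a < 1)).exists
  have hsqrt : √(2 / 3) ≤ 1 := Real.sqrt_le_one.mpr (by norm_num)
  have hr : |r| < 1 := abs_lt.mpr ⟨by linarith, hr₁⟩
  refine ⟨a, ha₀.le, ha₁, ?_⟩
  rw [majorant_deriv_xi ha₀.le ha₁.le hr]
  have hden : 0 < 1 - a * r := by nlinarith [le_abs_self r]
  have hgap : a + (1 - a ^ 2) * r * (2 - a * r) / (1 - a * r) ^ 2 - 1
      = (1 - a) * G a / (1 - a * r) ^ 2 := by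
    field_simp
    ring
  have ha₁' : 0 < 1 - a := sub_pos.mpr ha₁
  have hgap_pos : 0 < (1 - a) * G a / (1 - a * r) ^ 2 := by positivity
  linarith

/-- The radius `1 - √(2/3)` in the Bohr inequality for derivatives is best
possible. -/
theorem bohr_deriv_radius_sharp :
    ∀ r : ℝ, 1 - Real.sqrt (2 / 3) < r → r < 1 →
      ∃ w : ℂ → ℂ, AnalyticOnNhd ℂ w (ball 0 1) ∧
        Set.MapsTo w (ball 0 1) (ball 0 1) ∧ w 0 = 0 ∧
        1 < majorant (deriv w) r := by
  intro r hr₀ hr₁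
  obtain ⟨a, ha₀, ha₁, hlt⟩ := exists_one_lt_majorant_deriv_xi hr₀ hr₁
  have ha : |a| ≤ 1 := abs_le.mpr ⟨by linarith, ha₁.le⟩
  exact ⟨xi a, analyticOnNhd_xi ha, mapsTo_xi ha, xi_zero, hlt⟩
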